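/- arXiv:1901.10649 — 6 statements merged into one kernel-verified Lean document; each statement's English description precedes it below -/
import Mathlib

section
/- For any function f : X → ℝ∪{+∞,−∞} on a real locally convex space X and any (x, x*) ∈ X × X*, the Fitzpatrick function of the subdifferential ∂f satisfies φ_{∂f}(x, x*) ≤ f**(x) + f*(x*). -/
open scoped Topology

section Defs

variable {X : Type*} [AddCommGroup X] [Module ℝ X] [TopologicalSpace X]

/-- `p ∈ ∂f(x)`: `f x` is finite and `f y ≥ f x + ⟨y - x, p⟩` for all `y`. -/
def IsSubgrad (f : X → EReal) (x : X) (p : X →L[ℝ] ℝ) : Prop :=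
  f x ≠ ⊤ ∧ f x ≠ ⊥ ∧ ∀ y, f x + (p (y - x) : EReal) ≤ f y

/-- Graph of the convex subdifferential of `f`. -/
def graphSub (f : X → EReal) : Set (X × (X →L[ℝ] ℝ)) :=
  {q | IsSubgrad f q.1 q.2}

/-- Domain `D(∂f)` of the subdifferential. -/
def subdiffDom (f : X → EReal) : Set X := {x | ∃ p, IsSubgrad f x p}

/-- Range `R(∂f)` of the subdifferential. -/
def subdiffRan (f : X → EReal) : Set (X →L[ℝ] ℝ) := {p | ∃ x, IsSubgrad f x p}

/-- Monotone subset of `X × X*`. -/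
def MonotoneSet (S : Set (X × (X →L[ℝ] ℝ))) : Prop :=
  ∀ a ∈ S, ∀ b ∈ S, 0 ≤ a.2 (a.1 - b.1) - b.2 (a.1 - b.1)

/-- Maximal monotone subset of `X × X*` (maximal w.r.t. graph inclusion). -/
def MaxMonotoneSet (S : Set (X × (X →L[ℝ] ℝ))) : Prop :=
  MonotoneSet S ∧ ∀ T, MonotoneSet T → S ⊆ T → T = S

/-- Proper function: never `−∞` and not identically `+∞`. -/
def ProperE {Y : Type*} (f : Y → EReal) : Prop :=
  (∃ x, f x ≠ ⊤) ∧ ∀ x, f x ≠ ⊥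

/-- Convexity of an extended-real-valued function via its epigraph. -/
def ConvexEpi (f : X → EReal) : Prop :=
  Convex ℝ {q : X × ℝ | f q.1 ≤ (q.2 : EReal)}

/-- The lsc convex hull: the greatest lsc convex function majorized by `f`. -/
noncomputable def lscConvHull (f : X → EReal) : X → EReal := fun x =>
  sSup {v | ∃ g : X → EReal, ConvexEpi g ∧ LowerSemicontinuous g ∧ g ≤ f ∧ v = g x}

/-- Convex conjugate w.r.t. the dual system `(X, X*)`. -/
noncomputable def conjE (f : X → EReal) (p : X →L[ℝ] ℝ) : EReal :=
  ⨆ x, ((p x : EReal) - f x)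

/-- Biconjugate `f**`. -/
noncomputable def biconjE (f : X → EReal) (x : X) : EReal :=
  ⨆ p : X →L[ℝ] ℝ, ((p x : EReal) - conjE f p)

/-- Fitzpatrick function of `∂f`. -/
noncomputable def fitzSub (f : X → EReal) (x : X) (p : X →L[ℝ] ℝ) : EReal :=
  ⨆ a, ⨆ s, ⨆ _ : IsSubgrad f a s, ((s (x - a) + p a : ℝ) : EReal)

/-- Upper envelope `f^∪(x) = sup{⟨x−a, a*⟩ + f(a) : (a,a*) ∈ Graph ∂f}`. -/
noncomputable def upperEnv (f : X → EReal) (x : X) : EReal :=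
  ⨆ a, ⨆ s, ⨆ _ : IsSubgrad f a s, ((s (x - a) : EReal) + f a)

end Defs

/-!
If `s ∈ ∂f(a)`, the Fenchel–Young inequality is an equality at `(a, s)`:
`f*(s) = ⟨a, s⟩ - f(a)`. Hence `⟨x - a, s⟩ + f(a) = ⟨x, s⟩ - f*(s) ≤ f**(x)`, and
Fenchel–Young at `(a, p)` gives `⟨a, p⟩ - f(a) ≤ f*(p)`. Since `f(a)` is finite, the sum of
these two bounds is `⟨x - a, s⟩ + ⟨a, p⟩ ≤ f**(x) + f*(p)`.
-/

section

variable {X : Type*} [AddCommGroup X] [Module ℝ X] [TopologicalSpace X]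

theorem sub_le_conjE (f : X → EReal) (p : X →L[ℝ] ℝ) (a : X) : (p a : EReal) - f a ≤ conjE f p :=
  le_iSup (fun y => (p y : EReal) - f y) a

theorem sub_conjE_le_biconjE (f : X → EReal) (p : X →L[ℝ] ℝ) (x : X) :
    (p x : EReal) - conjE f p ≤ biconjE f x :=
  le_iSup (fun q : X →L[ℝ] ℝ => (q x : EReal) - conjE f q) p

namespace IsSubgrad

variable {f : X → EReal} {a : X} {s : X →L[ℝ] ℝ}

theorem coe_toReal (hs : IsSubgrad f a s) : ((f a).toReal : EReal) = f a :=
  EReal.coe_toReal hs.1 hs.2.1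

theorem conjE_eq (hs : IsSubgrad f a s) : conjE f s = ((s a - (f a).toReal : ℝ) : EReal) := by
  refine le_antisymm (iSup_le fun y => ?_) ?_
  · have hy : (((f a).toReal + s (y - a) : ℝ) : EReal) ≤ f y := by
      rw [EReal.coe_add, hs.coe_toReal]
      exact hs.2.2 y
    calc (s y : EReal) - f y ≤ (s y : EReal) - (((f a).toReal + s (y - a) : ℝ) : EReal) :=
          EReal.sub_le_sub le_rfl hy
      _ = ((s a - (f a).toReal : ℝ) : EReal) := by
          rw [← EReal.coe_sub, map_sub]
          ring_nf
  · rw [EReal.coe_sub, hs.coe_toReal]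
    exact sub_le_conjE f s a

theorem add_le_biconjE (hs : IsSubgrad f a s) (x : X) :
    ((s (x - a) + (f a).toReal : ℝ) : EReal) ≤ biconjE f x :=
  calc ((s (x - a) + (f a).toReal : ℝ) : EReal) = (s x : EReal) - conjE f s := by
        rw [hs.conjE_eq, ← EReal.coe_sub, map_sub]
        ring_nf
    _ ≤ biconjE f x := sub_conjE_le_biconjE f s x

end IsSubgrad

end

theorem fitzpatrick_le_biconj_add_conj_general {X : Type*} [AddCommGroup X] [Module ℝ X] [TopologicalSpace X]
    (f : X → EReal) (x : X) (p : X →L[ℝ] ℝ) :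
    fitzSub f x p ≤ biconjE f x + conjE f p := by
  refine iSup_le fun a => iSup_le fun s => iSup_le fun hs => ?_
  calc ((s (x - a) + p a : ℝ) : EReal)
      = ((s (x - a) + (f a).toReal : ℝ) : EReal) + ((p a : EReal) - f a) := by
        rw [← hs.coe_toReal, ← EReal.coe_sub, ← EReal.coe_add, EReal.toReal_coe]
        ring_nf
    _ ≤ biconjE f x + conjE f p := add_le_add (hs.add_le_biconjE x) (sub_le_conjE f p a)

theorem fitzpatrick_le_biconj_add_conj {X : Type*} [AddCommGroup X] [Module ℝ X] [TopologicalSpace X]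
    [IsTopologicalAddGroup X] [ContinuousSMul ℝ X] [LocallyConvexSpace ℝ X] [T2Space X]
    (f : X → EReal) (x : X) (p : X →L[ℝ] ℝ) :
    fitzSub f x p ≤ biconjE f x + conjE f p :=
  fitzpatrick_le_biconj_add_conj_general f x p
end

section
/- Let f : X → ℝ∪{+∞} with Graph(∂f) ≠ ∅. If ∂f is maximal monotone then ∂f = ∂(cl conv f). -/
open scoped Topology

/-!
Every subdifferential graph is monotone, and `∂f ⊆ ∂(cl conv f)` for any `f`: if `p ∈ ∂f(x)`, the
affine minorant `y ↦ f x + p (y - x)` of `f` is lsc and convex, so it lies below `cl conv f`, which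
is itself below `f` and hence agrees with `f` at `x`. Maximality of `∂f` then forces equality.
-/

open Set

section SubdiffLscConvHull

variable {X : Type*} [AddCommGroup X] [Module ℝ X]

lemma ConvexOn.convexEpi_coe {φ : X → ℝ} (hφ : ConvexOn ℝ univ φ) :
    ConvexEpi fun x => (φ x : EReal) := by
  simpa [ConvexEpi] using hφ.convex_epigraph

variable [TopologicalSpace X]

lemma MaxMonotoneSet.eq_of_subset {S T : Set (X × (X →L[ℝ] ℝ))} (hS : MaxMonotoneSet S)
    (hT : MonotoneSet T) (hST : S ⊆ T) : S = T :=
  (hS.2 T hT hST).symm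

lemma monotoneSet_graphSub (f : X → EReal) : MonotoneSet (graphSub f) := by
  rintro ⟨a, p⟩ ⟨hat, hab, hap⟩ ⟨b, q⟩ ⟨hbt, hbb, hbq⟩
  have hab' := hap b
  have hba := hbq a
  rw [← EReal.coe_toReal hat hab, ← EReal.coe_toReal hbt hbb, ← EReal.coe_add,
    EReal.coe_le_coe_iff] at hab' hba
  have hneg : p (b - a) = -p (a - b) := by rw [← map_neg, neg_sub]
  dsimp only
  linarith

lemma lscConvHull_le (f : X → EReal) : lscConvHull f ≤ f := fun x =>
  sSup_le <| by rintro v ⟨g, -, -, hgf, rfl⟩; exact hgf x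

lemma le_lscConvHull {f g : X → EReal} (hg : ConvexEpi g) (hg_lsc : LowerSemicontinuous g)
    (hgf : g ≤ f) : g ≤ lscConvHull f := fun _ =>
  le_sSup ⟨g, hg, hg_lsc, hgf, rfl⟩

lemma isSubgrad_lscConvHull {f : X → EReal} {x : X} {p : X →L[ℝ] ℝ} (h : IsSubgrad f x p) :
    IsSubgrad (lscConvHull f) x p := by
  obtain ⟨hxt, hxb, hxp⟩ := h
  set r := (f x).toReal
  have hr : f x = r := (EReal.coe_toReal hxt hxb).symm
  set a : X → ℝ := fun y => p y + (r - p x)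
  have ha_conv : ConvexEpi fun y => (a y : EReal) :=
    ((p : X →ₗ[ℝ] ℝ).convexOn convex_univ |>.add_const (r - p x)).convexEpi_coe
  have ha_lsc : LowerSemicontinuous fun y => (a y : EReal) :=
    (continuous_coe_real_ereal.comp (p.continuous.add continuous_const)).lowerSemicontinuous
  have ha_eq (y : X) : (a y : EReal) = f x + p (y - x) := by
    rw [hr, map_sub, ← EReal.coe_add]; congr 1; ring
  have ha_le : (fun y => (a y : EReal)) ≤ lscConvHull f :=
    le_lscConvHull ha_conv ha_lsc fun y => (ha_eq y).trans_le (hxp y)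
  have hx : lscConvHull f x = f x :=
    le_antisymm (lscConvHull_le f x) (by simpa [ha_eq] using ha_le x)
  exact ⟨hx ▸ hxt, hx ▸ hxb, fun y => hx ▸ (ha_eq y).symm.trans_le (ha_le y)⟩

lemma graphSub_subset_graphSub_lscConvHull (f : X → EReal) :
    graphSub f ⊆ graphSub (lscConvHull f) :=
  fun _ => isSubgrad_lscConvHull

end SubdiffLscConvHull

theorem subdiff_maxMonotone_eq_subdiff_clconv_general {X : Type*} [AddCommGroup X] [Module ℝ X] [TopologicalSpace X]
    (f : X → EReal)
    (hmax : MaxMonotoneSet (graphSub f)) :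
    graphSub f = graphSub (lscConvHull f) :=
  hmax.eq_of_subset (monotoneSet_graphSub _) (graphSub_subset_graphSub_lscConvHull f)

theorem subdiff_maxMonotone_eq_subdiff_clconv {X : Type*} [AddCommGroup X] [Module ℝ X] [TopologicalSpace X]
    [IsTopologicalAddGroup X] [ContinuousSMul ℝ X] [LocallyConvexSpace ℝ X] [T2Space X]
    (f : X → EReal) (hbot : ∀ x, f x ≠ ⊥) (hne : (graphSub f).Nonempty)
    (hmax : MaxMonotoneSet (graphSub f)) :
    graphSub f = graphSub (lscConvHull f) :=
  subdiff_maxMonotone_eq_subdiff_clconv_general f hmax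
end

section
/- Every function h : ℝ → ℝ∪{+∞} whose subdifferential ∂h is maximal monotone is proper and convex. -/
open scoped Topology

lemma lin_apply (p : ℝ →L[ℝ] ℝ) (z : ℝ) : p z = z * p 1 := by
  have := p.map_smul z (1 : ℝ)
  simpa [smul_eq_mul] using this

lemma subgrad_toReal {h : ℝ → EReal} {a y r : ℝ} {s : ℝ →L[ℝ] ℝ}
    (hs : IsSubgrad h a s) (hy : h y ≤ (r : EReal)) :
    (h a).toReal + s (y - a) ≤ r := by
  have h1 : h a + ((s (y - a) : ℝ) : EReal) ≤ (r : EReal) := (hs.2.2 y).trans hy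
  rw [← EReal.coe_toReal hs.1 hs.2.1, ← EReal.coe_add] at h1
  exact_mod_cast h1

lemma subgrad_lower {h : ℝ → EReal} {a₀ a : ℝ} {s₀ s : ℝ →L[ℝ] ℝ}
    (hs₀ : IsSubgrad h a₀ s₀) (hs : IsSubgrad h a s) :
    (h a₀).toReal + s₀ (a - a₀) ≤ (h a).toReal := by
  have h1 : h a₀ + ((s₀ (a - a₀) : ℝ) : EReal) ≤ h a := hs₀.2.2 a
  rw [← EReal.coe_toReal hs₀.1 hs₀.2.1, ← EReal.coe_add,
      ← EReal.coe_toReal hs.1 hs.2.1] at h1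
  exact_mod_cast h1

lemma subgrad_of_slopes (h : ℝ → EReal) (hmax : MaxMonotoneSet (graphSub h))
    (m q : ℝ)
    (hL : ∀ a (s : ℝ →L[ℝ] ℝ), IsSubgrad h a s → a < m → s 1 ≤ q)
    (hR : ∀ a (s : ℝ →L[ℝ] ℝ), IsSubgrad h a s → m < a → q ≤ s 1) :
    IsSubgrad h m (q • ContinuousLinearMap.id ℝ ℝ) := by
  set P : ℝ × (ℝ →L[ℝ] ℝ) := (m, q • ContinuousLinearMap.id ℝ ℝ) with hP
  have key : ∀ a (s : ℝ →L[ℝ] ℝ), IsSubgrad h a s →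
      0 ≤ (m - a) * (q - s 1) := by
    intro a s hs
    rcases lt_trichotomy a m with hc | hc | hc
    · exact mul_nonneg (by linarith) (by linarith [hL a s hs hc])
    · simp [hc]
    · have h2 : (m - a) * (q - s 1) = (a - m) * (s 1 - q) := by ring
      rw [h2]
      exact mul_nonneg (by linarith) (by linarith [hR a s hs hc])
  have hmono : MonotoneSet (insert P (graphSub h)) := by
    rintro a (ha | ha) b (hb | hb)
    · subst ha; subst hb; simp
    · subst ha
      have hk := key b.1 b.2 hb
      have e1 : P.2 (P.1 - b.1) = q * (m - b.1) := by
        simp [hP, smul_eq_mul]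
      have e2 : b.2 (P.1 - b.1) = (m - b.1) * b.2 1 := by
        simp only [hP]; exact lin_apply b.2 (m - b.1)
      rw [e1, e2]; nlinarith [hk]
    · subst hb
      have hk := key a.1 a.2 ha
      have e1 : P.2 (a.1 - P.1) = q * (a.1 - m) := by
        simp [hP, smul_eq_mul]
      have e2 : a.2 (a.1 - P.1) = (a.1 - m) * a.2 1 := by
        simp only [hP]; exact lin_apply a.2 (a.1 - m)
      rw [e1, e2]; nlinarith [hk]
    · exact hmax.1 a ha b hb
  have heq := hmax.2 _ hmono (Set.subset_insert _ _)
  have : P ∈ graphSub h := heq ▸ Set.mem_insert _ _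
  exact this

lemma exists_subgrad_mid (h : ℝ → EReal) (hmax : MaxMonotoneSet (graphSub h))
    {a₀ : ℝ} {s₀ : ℝ →L[ℝ] ℝ} (hs₀ : IsSubgrad h a₀ s₀)
    {x₁ x₂ m r₁ r₂ : ℝ} (h1 : h x₁ ≤ (r₁ : EReal)) (h2 : h x₂ ≤ (r₂ : EReal))
    (hm1 : x₁ < m) (hm2 : m < x₂) :
    ∃ p, IsSubgrad h m p := by
  classical
  set c₀ : ℝ := (h a₀).toReal with hc₀
  set k : ℝ := s₀ 1 with hk
  set L : Set ℝ := {t | ∃ a s, IsSubgrad h a s ∧ a < m ∧ s 1 = t} with hLdef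
  set R : Set ℝ := {t | ∃ a s, IsSubgrad h a s ∧ m < a ∧ s 1 = t} with hRdef
  -- L elementwise ≤ R
  have hLR : ∀ t ∈ L, ∀ u ∈ R, t ≤ u := by
    rintro t ⟨a, s, hs, ham, rfl⟩ u ⟨b, v, hv, hbm, rfl⟩
    have hmono := hmax.1 (a, s) hs (b, v) hv
    simp only at hmono
    rw [lin_apply s (a - b), lin_apply v (a - b)] at hmono
    nlinarith [hmono]
  -- R is bounded below
  have hRbdd : BddBelow R := by
    refine ⟨k - |c₀ - r₁ + (x₁ - a₀) * k| / (m - x₁), ?_⟩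
    rintro t ⟨a, s, hs, ham, rfl⟩
    set C : ℝ := c₀ - r₁ + (x₁ - a₀) * k with hC
    have hi := subgrad_toReal hs h1
    rw [lin_apply s (x₁ - a)] at hi
    have hii := subgrad_lower hs₀ hs
    rw [lin_apply s₀ (a - a₀)] at hii
    -- (a - x₁) * s 1 ≥ k * (a - x₁) + C
    have hd : (0:ℝ) < m - x₁ := by linarith
    have hda : m - x₁ ≤ a - x₁ := by linarith
    have hmain : k * (a - x₁) + C ≤ (a - x₁) * s 1 := by nlinarith [hi, hii]
    have habs1 : -|C| ≤ C := neg_abs_le C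
    have habs2 : |C| * (m - x₁) ≤ |C| * (a - x₁) :=
      mul_le_mul_of_nonneg_left hda (abs_nonneg C)
    -- want : k - |C| / (m - x₁) ≤ s 1
    rw [sub_le_iff_le_add, ← sub_le_iff_le_add', le_div_iff₀ hd]
    rcases le_or_gt k (s 1) with hks | hks
    · nlinarith [abs_nonneg C, hd]
    · have h3 : (k - s 1) * (m - x₁) ≤ (k - s 1) * (a - x₁) :=
        mul_le_mul_of_nonneg_left hda (by linarith)
      nlinarith [hmain, habs1, h3]
  -- L is bounded above
  have hLbdd : BddAbove L := by
    refine ⟨k + |r₂ - c₀ - (x₂ - a₀) * k| / (x₂ - m), ?_⟩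
    rintro t ⟨a, s, hs, ham, rfl⟩
    set C : ℝ := r₂ - c₀ - (x₂ - a₀) * k with hC
    have hi := subgrad_toReal hs h2
    rw [lin_apply s (x₂ - a)] at hi
    have hii := subgrad_lower hs₀ hs
    rw [lin_apply s₀ (a - a₀)] at hii
    have hd : (0:ℝ) < x₂ - m := by linarith
    have hda : x₂ - m ≤ x₂ - a := by linarith
    have hmain : (x₂ - a) * s 1 ≤ k * (x₂ - a) + C := by nlinarith [hi, hii]
    have habs1 : C ≤ |C| := le_abs_self C
    have habs2 : |C| * (x₂ - m) ≤ |C| * (x₂ - a) :=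
      mul_le_mul_of_nonneg_left hda (abs_nonneg C)
    -- want : s 1 ≤ k + |C| / (x₂ - m)
    rw [← sub_le_iff_le_add', le_div_iff₀ hd]
    rcases le_or_gt (s 1) k with hks | hks
    · nlinarith [abs_nonneg C, hd]
    · have h3 : (s 1 - k) * (x₂ - m) ≤ (s 1 - k) * (x₂ - a) :=
        mul_le_mul_of_nonneg_left hda (by linarith)
      nlinarith [hmain, habs1, h3]
  -- choose the slope q
  rcases Set.eq_empty_or_nonempty L with hLe | hLne
  · rcases Set.eq_empty_or_nonempty R with hRe | hRne
    · refine ⟨_, subgrad_of_slopes h hmax m 0 ?_ ?_⟩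
      · intro a s hs ham
        have hmem : s 1 ∈ L := ⟨a, s, hs, ham, rfl⟩
        rw [hLe] at hmem; exact absurd hmem (Set.notMem_empty _)
      · intro a s hs ham
        have hmem : s 1 ∈ R := ⟨a, s, hs, ham, rfl⟩
        rw [hRe] at hmem; exact absurd hmem (Set.notMem_empty _)
    · refine ⟨_, subgrad_of_slopes h hmax m (sInf R) ?_ ?_⟩
      · intro a s hs ham
        have hmem : s 1 ∈ L := ⟨a, s, hs, ham, rfl⟩
        rw [hLe] at hmem; exact absurd hmem (Set.notMem_empty _)
      · intro a s hs ham
        exact csInf_le hRbdd ⟨a, s, hs, ham, rfl⟩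
  · refine ⟨_, subgrad_of_slopes h hmax m (sSup L) ?_ ?_⟩
    · intro a s hs ham
      exact le_csSup hLbdd ⟨a, s, hs, ham, rfl⟩
    · intro a s hs ham
      exact csSup_le hLne fun t ht => hLR t ht (s 1) ⟨a, s, hs, ham, rfl⟩

lemma combo_le (h : ℝ → EReal) (hmax : MaxMonotoneSet (graphSub h))
    {a₀ : ℝ} {s₀ : ℝ →L[ℝ] ℝ} (hs₀ : IsSubgrad h a₀ s₀)
    {x₁ x₂ r₁ r₂ a b : ℝ} (h1 : h x₁ ≤ (r₁ : EReal)) (h2 : h x₂ ≤ (r₂ : EReal))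
    (ha : 0 ≤ a) (hb : 0 ≤ b) (hab : a + b = 1) :
    h (a * x₁ + b * x₂) ≤ ((a * r₁ + b * r₂ : ℝ) : EReal) := by
  -- degenerate cases
  rcases eq_or_lt_of_le ha with ha0 | ha
  · have hb1 : b = 1 := by linarith
    rw [← ha0, hb1]; simpa using h2
  rcases eq_or_lt_of_le hb with hb0 | hb
  · have ha1 : a = 1 := by linarith
    rw [← hb0, ha1]; simpa using h1
  rcases eq_or_ne x₁ x₂ with hx | hx
  · subst hx
    have hmeq : a * x₁ + b * x₁ = x₁ := by rw [← add_mul, hab, one_mul]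
    have er1 : a * r₁ + b * r₁ = r₁ := by rw [← add_mul, hab, one_mul]
    have er2 : a * r₂ + b * r₂ = r₂ := by rw [← add_mul, hab, one_mul]
    rw [hmeq]
    rcases le_total r₁ r₂ with hr | hr
    · refine h1.trans ?_
      have : r₁ ≤ a * r₁ + b * r₂ := by nlinarith [mul_nonneg hb.le (sub_nonneg.mpr hr), er1]
      exact_mod_cast this
    · refine h2.trans ?_
      have : r₂ ≤ a * r₁ + b * r₂ := by nlinarith [mul_nonneg ha.le (sub_nonneg.mpr hr), er2]
      exact_mod_cast this
  set m : ℝ := a * x₁ + b * x₂ with hm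
  have e1 : a * x₁ + b * x₁ = x₁ := by rw [← add_mul, hab, one_mul]
  have e2 : a * x₂ + b * x₂ = x₂ := by rw [← add_mul, hab, one_mul]
  have hp : ∃ p, IsSubgrad h m p := by
    rcases lt_or_gt_of_ne hx with hlt | hlt
    · have hm1 : x₁ < m := by nlinarith [mul_pos hb (by linarith : (0:ℝ) < x₂ - x₁), e1]
      have hm2 : m < x₂ := by nlinarith [mul_pos ha (by linarith : (0:ℝ) < x₂ - x₁), e2]
      exact exists_subgrad_mid h hmax hs₀ h1 h2 hm1 hm2
    · have hm1 : x₂ < m := by nlinarith [mul_pos ha (by linarith : (0:ℝ) < x₁ - x₂), e2]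
      have hm2 : m < x₁ := by nlinarith [mul_pos hb (by linarith : (0:ℝ) < x₁ - x₂), e1]
      exact exists_subgrad_mid h hmax hs₀ h2 h1 hm1 hm2
  obtain ⟨p, hp⟩ := hp
  have i1 := subgrad_toReal hp h1
  have i2 := subgrad_toReal hp h2
  rw [lin_apply p (x₁ - m)] at i1
  rw [lin_apply p (x₂ - m)] at i2
  have hzero : a * (x₁ - m) + b * (x₂ - m) = 0 := by
    rw [hm]; linear_combination (-(a * x₁) - b * x₂) * hab
  have hz2 : (a * (x₁ - m) + b * (x₂ - m)) * p 1 = 0 := by rw [hzero, zero_mul]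
  have et : a * (h m).toReal + b * (h m).toReal = (h m).toReal := by
    rw [← add_mul, hab, one_mul]
  have hfin : (h m).toReal ≤ a * r₁ + b * r₂ := by
    nlinarith [mul_le_mul_of_nonneg_left i1 ha.le, mul_le_mul_of_nonneg_left i2 hb.le,
      hz2, et]
  rw [← EReal.coe_toReal hp.1 hp.2.1]
  exact_mod_cast hfin

theorem maxMonotone_subdiff_real_proper_convex
    (h : ℝ → EReal) (hbot : ∀ x, h x ≠ ⊥)
    (hmax : MaxMonotoneSet (graphSub h)) :
    ProperE h ∧ ConvexEpi h := by
  have hne : (graphSub h).Nonempty := by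
    rcases Set.eq_empty_or_nonempty (graphSub h) with hc | hc
    · exfalso
      have hmono : MonotoneSet ({((0:ℝ), (0 : ℝ →L[ℝ] ℝ))} : Set (ℝ × (ℝ →L[ℝ] ℝ))) := by
        rintro x hx y hy
        rw [Set.mem_singleton_iff] at hx hy
        subst hx; subst hy; simp
      have heq := hmax.2 _ hmono (hc ▸ Set.empty_subset _)
      rw [hc] at heq
      exact absurd heq (by simp)
    · exact hc
  obtain ⟨⟨a₀, s₀⟩, hs₀⟩ := hne
  have hs₀' : IsSubgrad h a₀ s₀ := hs₀
  constructor
  · exact ⟨⟨a₀, hs₀'.1⟩, hbot⟩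
  · rintro ⟨x₁, r₁⟩ hq1 ⟨x₂, r₂⟩ hq2 a b ha hb hab
    simp only [Set.mem_setOf_eq] at hq1 hq2 ⊢
    have hpt : (a • ((x₁ : ℝ), r₁) + b • ((x₂ : ℝ), r₂)) = (a * x₁ + b * x₂, a * r₁ + b * r₂) := by
      simp [Prod.ext_iff, smul_eq_mul]
    rw [hpt]
    exact combo_le h hmax hs₀' hq1 hq2 ha hb hab
end

section
/- Let f : X → ℝ̄. Then the iterated upper envelope satisfies (f^∪)^∪ = f^∪. -/
open scoped Topology

/-!
Every subgradient `s ∈ ∂f(a)` has its affine minorant `f a + s (· - a)` below `f^∪`, touching it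
at `a`; hence `f^∪ a = f a` and `s ∈ ∂f^∪(a)`. So `Graph ∂f ⊆ Graph ∂f^∪` with `f^∪ = f` there, which
gives `f^∪ ≤ (f^∪)^∪`, while `g^∪ ≤ g` holds for every `g`.
-/

section UpperEnv

variable {X : Type*} [AddCommGroup X] [Module ℝ X] [TopologicalSpace X]

lemma upperEnv_le (f : X → EReal) (x : X) : upperEnv f x ≤ f x :=
  iSup_le fun a => iSup_le fun s => iSup_le fun h => by
    rw [add_comm]
    exact h.2.2 x

lemma IsSubgrad.add_le_upperEnv {f : X → EReal} {a : X} {s : X →L[ℝ] ℝ}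
    (h : IsSubgrad f a s) (x : X) : (s (x - a) : EReal) + f a ≤ upperEnv f x :=
  le_iSup_of_le a <| le_iSup_of_le s <| le_iSup_of_le h le_rfl

lemma IsSubgrad.upperEnv_eq {f : X → EReal} {a : X} {s : X →L[ℝ] ℝ}
    (h : IsSubgrad f a s) : upperEnv f a = f a := by
  refine le_antisymm (upperEnv_le f a) ?_
  simpa using h.add_le_upperEnv a

lemma IsSubgrad.upperEnv {f : X → EReal} {a : X} {s : X →L[ℝ] ℝ}
    (h : IsSubgrad f a s) : IsSubgrad (upperEnv f) a s := by
  rw [IsSubgrad, h.upperEnv_eq]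
  exact ⟨h.1, h.2.1, fun y => add_comm (f a) _ ▸ h.add_le_upperEnv y⟩

end UpperEnv

theorem upperEnv_idempotent_general {X : Type*} [AddCommGroup X] [Module ℝ X] [TopologicalSpace X]
    (f : X → EReal) :
    upperEnv (upperEnv f) = upperEnv f := by
  funext x
  refine le_antisymm (upperEnv_le _ x) ?_
  refine iSup_le fun a => iSup_le fun s => iSup_le fun h => ?_
  calc (s (x - a) : EReal) + f a
      = (s (x - a) : EReal) + upperEnv f a := by rw [h.upperEnv_eq]
    _ ≤ upperEnv (upperEnv f) x := h.upperEnv.add_le_upperEnv x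

theorem upperEnv_idempotent {X : Type*} [AddCommGroup X] [Module ℝ X] [TopologicalSpace X]
    [IsTopologicalAddGroup X] [ContinuousSMul ℝ X] [LocallyConvexSpace ℝ X] [T2Space X]
    (f : X → EReal) :
    upperEnv (upperEnv f) = upperEnv f :=
  upperEnv_idempotent_general f
end

section
/- Let f : X → ℝ̄ and for n ≥ 2 define f^{n∪}(x) = sup{⟨x−a₁,a₁*⟩ + ⟨a₁−a₂,a₂*⟩ + … + ⟨a_{n−1}−a_n, a_n*⟩ + f(a_n) : (a_k, a_k*) ∈ Graph ∂f for k = 1,…,n}. Then f^{n∪} = f^∪ for every n ≥ 2. -/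
open scoped Topology

/-!
Each subgradient inequality `⟨a_{k-1} - a_k, a_k*⟩ + f(a_k) ≤ f(a_{k-1})` lets the chain
`⟨x - a₁, a₁*⟩ + ⟨a₁ - a₂, a₂*⟩ + ⋯ + f(a_n)` be shortened from the end, so it is bounded by the
one-step term `⟨x - a₁, a₁*⟩ + f(a₁)`; conversely, a constant chain recovers every one-step term.
-/

theorem IsSubgrad.apply_sub_add_le {X : Type*} [AddCommGroup X] [Module ℝ X] [TopologicalSpace X]
    {f : X → EReal} {x : X} {p : X →L[ℝ] ℝ} (h : IsSubgrad f x p) (y : X) :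
    (p (y - x) : EReal) + f x ≤ f y := by
  rw [add_comm]
  exact h.2.2 y

theorem sum_subgrad_chain_add_le {X : Type*} [AddCommGroup X] [Module ℝ X] [TopologicalSpace X]
    (f : X → EReal) {n : ℕ} (a : Fin (n + 1) → X) (s : Fin n → (X →L[ℝ] ℝ))
    (h : ∀ k, IsSubgrad f (a k.succ) (s k)) :
    ((∑ k, s k (a k.castSucc - a k.succ) : ℝ) : EReal) + f (a (Fin.last n)) ≤ f (a 0) := by
  induction n with
  | zero => simp
  | succ n ih =>
    have ih' := ih (Fin.init a) (Fin.init s) fun k => h k.castSucc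
    calc ((∑ k, s k (a k.castSucc - a k.succ) : ℝ) : EReal) + f (a (Fin.last (n + 1)))
        = ((∑ k : Fin n, s k.castSucc (a k.castSucc.castSucc - a k.castSucc.succ) : ℝ) : EReal)
            + ((s (Fin.last n) (a (Fin.last n).castSucc - a (Fin.last n).succ) : EReal)
              + f (a (Fin.last n).succ)) := by
          rw [Fin.sum_univ_castSucc, EReal.coe_add, add_assoc, Fin.succ_last]
      _ ≤ ((∑ k : Fin n, s k.castSucc (a k.castSucc.castSucc - a k.castSucc.succ) : ℝ) : EReal)
            + f (a (Fin.last n).castSucc) := by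
          gcongr
          exact (h (Fin.last n)).apply_sub_add_le _
      _ ≤ f (a 0) := ih'

theorem iterated_upperEnv_eq_general {X : Type*} [AddCommGroup X] [Module ℝ X] [TopologicalSpace X]
    (f : X → EReal) (m : ℕ) (x : X) :
    (⨆ a : Fin (m + 2) → X, ⨆ s : Fin (m + 2) → (X →L[ℝ] ℝ),
      ⨆ _ : ∀ k, IsSubgrad f (a k) (s k),
        ((((s 0) (x - a 0) +
            ∑ k : Fin (m + 1), (s k.succ) (a k.castSucc - a k.succ) : ℝ)) : EReal)
          + f (a (Fin.last (m + 1))))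
      = upperEnv f x := by
  apply le_antisymm
  · refine iSup_le fun a => iSup_le fun s => iSup_le fun h => ?_
    have hchain := sum_subgrad_chain_add_le f a (fun k => s k.succ) fun k => h k.succ
    calc _ = ((s 0 (x - a 0) : ℝ) : EReal)
            + (((∑ k : Fin (m + 1), s k.succ (a k.castSucc - a k.succ) : ℝ) : EReal)
              + f (a (Fin.last (m + 1)))) := by rw [EReal.coe_add, add_assoc]
      _ ≤ (s 0 (x - a 0) : EReal) + f (a 0) := by gcongr
      _ ≤ upperEnv f x := le_iSup_of_le (a 0) (le_iSup_of_le (s 0) (le_iSup_of_le (h 0) le_rfl))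
  · refine iSup_le fun a => iSup_le fun s => iSup_le fun h => ?_
    refine le_iSup_of_le (fun _ => a) (le_iSup_of_le (fun _ => s) (le_iSup_of_le (fun _ => h) ?_))
    simp

theorem iterated_upperEnv_eq {X : Type*} [AddCommGroup X] [Module ℝ X] [TopologicalSpace X]
    [IsTopologicalAddGroup X] [ContinuousSMul ℝ X] [LocallyConvexSpace ℝ X] [T2Space X]
    (f : X → EReal) (m : ℕ) (x : X) :
    (⨆ a : Fin (m + 2) → X, ⨆ s : Fin (m + 2) → (X →L[ℝ] ℝ),
      ⨆ _ : ∀ k, IsSubgrad f (a k) (s k),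
        ((((s 0) (x - a 0) +
            ∑ k : Fin (m + 1), (s k.succ) (a k.castSucc - a k.succ) : ℝ)) : EReal)
          + f (a (Fin.last (m + 1))))
      = upperEnv f x :=
  iterated_upperEnv_eq_general f m x
end

section
/- Let X be a locally convex space and f a proper convex lsc function on X with maximal monotone subdifferential ∂f. Then f = f^∪ and f* = f^{*∪}; equivalently, f(x) = sup{⟨x, a*⟩ − f*(a*) : a* ∈ R(∂f)} for all x, and f*(x*) = sup{⟨x*, a⟩ − f(a) : a ∈ D(∂f)} for all x*. -/
open scoped Topology

/-!
Write `f^∪(x) = ⨆_{p ∈ R(∂f)} ⟨x, p⟩ - f*(p)` (`ranEnv`) and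
`f^{*∪}(p) = ⨆_{a ∈ D(∂f)} ⟨a, p⟩ - f(a)` (`domEnv`); clearly `f^∪ ≤ f` and `f^{*∪} ≤ f*`.
For any `(x, p)`, either `p ∈ ∂f(x)` or, by maximal monotonicity, some `(a, s) ∈ Graph ∂f` has
`⟨x - a, p - s⟩ < 0`; either way `⟨x, p⟩` is at most the Fitzpatrick function of `∂f` at `(x, p)`,
which is at most `f^∪(x) + f^{*∪}(p)` because `f*(s) = ⟨a, s⟩ - f(a)` on the graph.
Hence `f* ≤ f^{*∪}`, and `f ≤ f** ≤ f^∪`, where `f ≤ f**` is Fenchel–Moreau: separate a point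
below the epigraph from the closed convex epigraph, and if the separating hyperplane is vertical,
tilt the affine minorant given by any subgradient (the graph of `∂f` is nonempty by maximality).
-/

lemma EReal.coe_le_of_forall_le_coe {r : ℝ} {z : EReal} (h : ∀ t : ℝ, z ≤ t → r ≤ t) :
    (r : EReal) ≤ z :=
  EReal.le_of_forall_lt_iff_le.1 fun t ht => by exact_mod_cast h t ht.le

lemma nonneg_of_forall_ge_lt_add_mul {k u t₀ β : ℝ} (h : ∀ t ≥ t₀, u < k + t * β) : 0 ≤ β := by
  by_contra! hβ
  have hlt := h (max t₀ ((u - k) / β)) (le_max_left _ _)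
  have hle : max t₀ ((u - k) / β) * β ≤ (u - k) / β * β :=
    mul_le_mul_of_nonpos_right (le_max_right _ _) hβ.le
  rw [div_mul_cancel₀ _ hβ.ne] at hle
  linarith

section

variable {X : Type*} [AddCommGroup X] [Module ℝ X] [TopologicalSpace X]

lemma IsSubgrad.exists_eq_coe {f : X → EReal} {a : X} {s : X →L[ℝ] ℝ} (h : IsSubgrad f a s) :
    ∃ r : ℝ, f a = r :=
  ⟨(f a).toReal, (EReal.coe_toReal h.1 h.2.1).symm⟩

lemma conjE_eq_of_isSubgrad {f : X → EReal} {a : X} {s : X →L[ℝ] ℝ} (h : IsSubgrad f a s) :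
    conjE f s = (s a : EReal) - f a := by
  refine le_antisymm (iSup_le fun y => ?_) (le_iSup (fun y => (s y : EReal) - f y) a)
  obtain ⟨r, hr⟩ := h.exists_eq_coe
  have hy := h.2.2 y
  rw [hr, ← EReal.coe_add] at hy
  calc (s y : EReal) - f y ≤ (s y : EReal) - (r + s (y - a) : ℝ) := EReal.sub_le_sub le_rfl hy
    _ = (s a : EReal) - f a := by
      rw [hr, ← EReal.coe_sub, ← EReal.coe_sub, map_sub]
      ring_nf

noncomputable def ranEnv (f : X → EReal) (x : X) : EReal :=
  ⨆ p, ⨆ _ : p ∈ subdiffRan f, ((p x : EReal) - conjE f p)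

noncomputable def domEnv (f : X → EReal) (p : X →L[ℝ] ℝ) : EReal :=
  ⨆ a, ⨆ _ : a ∈ subdiffDom f, ((p a : EReal) - f a)

lemma ranEnv_le (f : X → EReal) (x : X) : ranEnv f x ≤ f x := by
  refine iSup₂_le fun s ⟨a, ha⟩ => ?_
  obtain ⟨r, hr⟩ := ha.exists_eq_coe
  have hx := ha.2.2 x
  rw [conjE_eq_of_isSubgrad ha, hr, ← EReal.coe_sub, ← EReal.coe_sub]
  rw [hr, ← EReal.coe_add, map_sub] at hx
  exact le_of_eq_of_le (by ring_nf) hx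

lemma domEnv_le_conjE (f : X → EReal) (p : X →L[ℝ] ℝ) : domEnv f p ≤ conjE f p :=
  iSup₂_le fun a _ => le_iSup (fun y => (p y : EReal) - f y) a

lemma fitzSub_le_ranEnv_add_domEnv (f : X → EReal) (x : X) (p : X →L[ℝ] ℝ) :
    fitzSub f x p ≤ ranEnv f x + domEnv f p := by
  refine iSup_le fun a => iSup_le fun s => iSup_le fun ha => ?_
  obtain ⟨r, hr⟩ := ha.exists_eq_coe
  have hran : ((s x - (s a - r) : ℝ) : EReal) ≤ ranEnv f x := by
    refine le_iSup₂_of_le s ⟨a, ha⟩ (le_of_eq ?_)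
    rw [conjE_eq_of_isSubgrad ha, hr, EReal.coe_sub, EReal.coe_sub]
  have hdom : ((p a - r : ℝ) : EReal) ≤ domEnv f p :=
    le_iSup₂_of_le a ⟨s, ha⟩ (by rw [hr, EReal.coe_sub])
  calc ((s (x - a) + p a : ℝ) : EReal)
        = ((s x - (s a - r) : ℝ) : EReal) + ((p a - r : ℝ) : EReal) := by
          rw [← EReal.coe_add, map_sub]; ring_nf
    _ ≤ ranEnv f x + domEnv f p := add_le_add hran hdom

lemma MaxMonotoneSet.mem_of_forall_nonneg {S : Set (X × (X →L[ℝ] ℝ))} (hS : MaxMonotoneSet S)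
    {z : X × (X →L[ℝ] ℝ)} (hz : ∀ w ∈ S, 0 ≤ z.2 (z.1 - w.1) - w.2 (z.1 - w.1)) : z ∈ S := by
  have hmono : MonotoneSet (insert z S) := by
    rintro a (rfl | ha) b (rfl | hb)
    · simp
    · exact hz b hb
    · have := hz a ha
      rw [← neg_sub b.1 a.1, map_neg, map_neg]
      linarith
    · exact hS.1 a ha b hb
  exact hS.2 _ hmono (Set.subset_insert z S) ▸ Set.mem_insert z S

lemma MaxMonotoneSet.nonempty {S : Set (X × (X →L[ℝ] ℝ))} (hS : MaxMonotoneSet S) :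
    S.Nonempty :=
  S.eq_empty_or_nonempty.elim (fun h => ⟨0, hS.mem_of_forall_nonneg (by simp [h])⟩) id

lemma MaxMonotoneSet.apply_le_fitzSub {f : X → EReal} (hmax : MaxMonotoneSet (graphSub f))
    (x : X) (p : X →L[ℝ] ℝ) : (p x : EReal) ≤ fitzSub f x p := by
  by_cases hrel : ∀ w ∈ graphSub f, 0 ≤ p (x - w.1) - w.2 (x - w.1)
  · have hx : IsSubgrad f x p := hmax.mem_of_forall_nonneg (z := (x, p)) hrel
    exact le_iSup₂_of_le x p (le_iSup_of_le hx (by simp))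
  · push Not at hrel
    obtain ⟨⟨a, s⟩, ha, hlt⟩ := hrel
    refine le_iSup₂_of_le a s (le_iSup_of_le ha ?_)
    rw [map_sub] at hlt
    exact_mod_cast (by linarith : p x ≤ s (x - a) + p a)

lemma exists_affine_le_of_vertical_separation {E : Set (X × ℝ)} {m q : X →L[ℝ] ℝ} {u b : ℝ}
    {x₀ : X} (hE : ∀ z ∈ E, u < m z.1) (hx₀ : m x₀ < u) (hq : ∀ z ∈ E, b + q z.1 ≤ z.2) (c : ℝ) :
    ∃ p : X →L[ℝ] ℝ, ∀ z ∈ E, c + p (z.1 - x₀) ≤ z.2 := by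
  -- `b + q + k (u - m)` is still a minorant on `E`, and this `k` makes it `≥ c` at `x₀`
  set k := max 0 ((c - b - q x₀) / (u - m x₀))
  have hk : c - b - q x₀ ≤ k * (u - m x₀) := (div_le_iff₀ (sub_pos.2 hx₀)).1 (le_max_right _ _)
  refine ⟨q - k • m, fun z hz => ?_⟩
  have htilt : 0 ≤ k * (m z.1 - u) := mul_nonneg (le_max_left _ _) (sub_pos.2 (hE z hz)).le
  simp only [sub_apply, smul_apply, smul_eq_mul, map_sub]
  linarith [hq z hz]

lemma affine_le_of_nonvertical_separation {E : Set (X × ℝ)} {m : X →L[ℝ] ℝ} {u β c : ℝ}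
    {x₀ : X} (hβ : 0 < β) (hE : ∀ z ∈ E, u < m z.1 + z.2 * β) (hx₀ : m x₀ + c * β < u) :
    ∀ z ∈ E, c + (-β⁻¹ • m) (z.1 - x₀) ≤ z.2 := by
  intro z hz
  have hmul : (c + (-β⁻¹ • m) (z.1 - x₀)) * β = c * β - m z.1 + m x₀ := by
    simp only [smul_apply, smul_eq_mul, map_sub]
    field_simp
    ring
  exact le_of_mul_le_mul_right (by linarith [hE z hz]) hβ

lemma conjE_le_of_affine_le {f : X → EReal} {p : X →L[ℝ] ℝ} {x₀ : X} {c : ℝ}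
    (h : ∀ y, ((c + p (y - x₀) : ℝ) : EReal) ≤ f y) : conjE f p ≤ ((p x₀ - c : ℝ) : EReal) := by
  refine iSup_le fun y => (EReal.sub_le_sub le_rfl (h y)).trans (le_of_eq ?_)
  rw [← EReal.coe_sub, map_sub]
  ring_nf

variable [IsTopologicalAddGroup X] [ContinuousSMul ℝ X] [LocallyConvexSpace ℝ X]

lemma exists_affine_le_of_lt {f : X → EReal} (hconv : ConvexEpi f) (hlsc : LowerSemicontinuous f)
    {a₀ : X} {s₀ : X →L[ℝ] ℝ} (h₀ : IsSubgrad f a₀ s₀) {x₀ : X} {c : ℝ} (hc : (c : EReal) < f x₀) :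
    ∃ p : X →L[ℝ] ℝ, ∀ y, ((c + p (y - x₀) : ℝ) : EReal) ≤ f y := by
  have hclosed : IsClosed {z : X × ℝ | f z.1 ≤ z.2} :=
    hlsc.isClosed_epigraph.preimage
      (continuous_fst.prodMk (continuous_coe_real_ereal.comp continuous_snd))
  obtain ⟨L, u, hLx₀, hLE⟩ :=
    geometric_hahn_banach_point_closed (x := (x₀, c)) hconv hclosed hc.not_ge
  set m := L.comp (.inl ℝ X ℝ)
  set β := L (0, 1)
  have hL : ∀ z : X × ℝ, L z = m z.1 + z.2 * β := fun z => by
    rw [← L.comp_inl_add_comp_inr]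
    congr 1
    change L (0, z.2) = _
    rw [show ((0 : X), z.2) = z.2 • ((0 : X), (1 : ℝ)) by simp, map_smul, smul_eq_mul]
  obtain ⟨t₀, ht₀⟩ := h₀.exists_eq_coe
  have hβ : 0 ≤ β := nonneg_of_forall_ge_lt_add_mul (t₀ := t₀) fun t ht => by
    simpa [hL] using hLE (a₀, t) (by simpa [ht₀] using ht)
  suffices ∃ p : X →L[ℝ] ℝ, ∀ z ∈ {z : X × ℝ | f z.1 ≤ z.2}, c + p (z.1 - x₀) ≤ z.2 from
    this.imp fun p hp y => EReal.coe_le_of_forall_le_coe fun t ht => hp (y, t) ht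
  rcases hβ.eq_or_lt with hβ | hβ
  · refine exists_affine_le_of_vertical_separation (q := s₀) (b := t₀ - s₀ a₀)
      (fun z hz => ?_) (by simpa [hL, ← hβ] using hLx₀) (fun z hz => ?_) c
    · simpa [hL, ← hβ] using hLE z hz
    · have h := (h₀.2.2 z.1).trans hz
      rw [ht₀, ← EReal.coe_add, EReal.coe_le_coe_iff, map_sub] at h
      linarith
  · exact ⟨_, affine_le_of_nonvertical_separation hβ (fun z hz => hL z ▸ hLE z hz)
      (by rwa [hL] at hLx₀)⟩

lemma le_biconjE {f : X → EReal} (hconv : ConvexEpi f) (hlsc : LowerSemicontinuous f)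
    {a₀ : X} {s₀ : X →L[ℝ] ℝ} (h₀ : IsSubgrad f a₀ s₀) (x : X) : f x ≤ biconjE f x := by
  refine EReal.ge_of_forall_gt_iff_ge.1 fun c hc => ?_
  obtain ⟨p, hp⟩ := exists_affine_le_of_lt hconv hlsc h₀ hc
  calc (c : EReal) = (p x : EReal) - ((p x - c : ℝ) : EReal) := by rw [← EReal.coe_sub]; ring_nf
    _ ≤ (p x : EReal) - conjE f p := EReal.sub_le_sub le_rfl (conjE_le_of_affine_le hp)
    _ ≤ biconjE f x := le_iSup (fun q : X →L[ℝ] ℝ => (q x : EReal) - conjE f q) p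

end

theorem maxMonotone_implies_upper_envelopes_general {X : Type*} [AddCommGroup X] [Module ℝ X] [TopologicalSpace X]
    [IsTopologicalAddGroup X] [ContinuousSMul ℝ X] [LocallyConvexSpace ℝ X]
    (f : X → EReal) (hconv : ConvexEpi f)
    (hlsc : LowerSemicontinuous f)
    (hmax : MaxMonotoneSet (graphSub f)) :
    (∀ x, f x = ⨆ p, ⨆ _ : p ∈ subdiffRan f, ((p x : EReal) - conjE f p)) ∧
      (∀ p : X →L[ℝ] ℝ, conjE f p = ⨆ a, ⨆ _ : a ∈ subdiffDom f, ((p a : EReal) - f a)) := by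
  obtain ⟨⟨a₀, s₀⟩, h₀⟩ := hmax.nonempty
  have hpairing : ∀ x p, (p x : EReal) ≤ ranEnv f x + domEnv f p := fun x p =>
    (hmax.apply_le_fitzSub x p).trans (fitzSub_le_ranEnv_add_domEnv f x p)
  refine ⟨fun x => le_antisymm ?_ (ranEnv_le f x), fun p => le_antisymm ?_ (domEnv_le_conjE f p)⟩
  · refine (le_biconjE hconv hlsc h₀ x).trans (iSup_le fun p => ?_)
    exact (EReal.sub_le_sub le_rfl (domEnv_le_conjE f p)).trans
      (EReal.sub_le_of_le_add (hpairing x p))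
  · exact iSup_le fun x =>
      EReal.sub_le_of_le_add' ((hpairing x p).trans (add_le_add_left (ranEnv_le f x) _))

theorem maxMonotone_implies_upper_envelopes {X : Type*} [AddCommGroup X] [Module ℝ X] [TopologicalSpace X]
    [IsTopologicalAddGroup X] [ContinuousSMul ℝ X] [LocallyConvexSpace ℝ X] [T2Space X]
    (f : X → EReal) (hproper : ProperE f) (hconv : ConvexEpi f)
    (hlsc : LowerSemicontinuous f)
    (hmax : MaxMonotoneSet (graphSub f)) :
    (∀ x, f x = ⨆ p, ⨆ _ : p ∈ subdiffRan f, ((p x : EReal) - conjE f p)) ∧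
      (∀ p : X →L[ℝ] ℝ, conjE f p = ⨆ a, ⨆ _ : a ∈ subdiffDom f, ((p a : EReal) - f a)) :=
  maxMonotone_implies_upper_envelopes_general f hconv hlsc hmax
end
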